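/- arXiv:1408.2418 — 3 statements merged into one kernel-verified Lean document; each statement's English description precedes it below -/
import Mathlib

section
/- Let n ≥ 2, w = se^{iψ} with 0 ≤ s < 1, and B(z) = ((z−w)/(1−w̄z))ⁿ. Define K = {e^{iφ} : |B'(e^{iφ})| ≤ 1}. Then K is empty if s < (n−1)/(n+1), K = {e^{i(ψ+π)}} if s = (n−1)/(n+1), and if s > (n−1)/(n+1) then K = {e^{iφ} : cos(φ−ψ) ≤ t(s)} where t(s) = (1−n+(1+n)s²)/(2s), which is a nondegenerate closed arc of the unit circle centered at e^{i(ψ+π)}. -/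
/-! On the unit circle `|z - w| = |1 - w̄ z|`, so `|B'(z)| = n (1 - |w|²) / |1 - w̄ z|²`, and for
`w = s e^{iψ}`, `z = e^{iφ}` the denominator is `1 + s² - 2 s cos (φ - ψ)`. Hence `|B'(e^{iφ})| ≤ 1`
iff `cos (φ - ψ) ≤ t(s)`. Since `t(s) + 1 = (1 + s) ((n + 1) s - (n - 1)) / (2 s)` and `cos ≥ -1`, this
sublevel set is empty, the single point `e^{i(ψ+π)}`, or an arc around it according to the sign of
`(n + 1) s - (n - 1)`. -/

open Complex ComplexConjugate
open scoped Real

section UnitCircle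

variable {w z : ℂ}

theorem one_sub_conj_mul_ne_zero (hw : ‖w‖ < 1) (hz : ‖z‖ = 1) : 1 - conj w * z ≠ 0 := by
  intro h
  have : ‖conj w * z‖ = 1 := by rw [← sub_eq_zero.mp h, norm_one]
  rw [norm_mul, norm_conj, hz, mul_one] at this
  exact hw.ne this

-- On the unit circle `z - w = z * conj (1 - conj w * z)`.
theorem norm_sub_eq_norm_one_sub_conj_mul (hz : ‖z‖ = 1) : ‖z - w‖ = ‖1 - conj w * z‖ := by
  have hzz : z * conj z = 1 := by rw [mul_conj, normSq_eq_norm_sq, hz]; norm_num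
  have key : z - w = z * conj (1 - conj w * z) := by
    rw [map_sub, map_one, map_mul, conj_conj]
    linear_combination w * hzz
  rw [key, norm_mul, hz, one_mul, norm_conj]

theorem hasDerivAt_blaschke_pow (n : ℕ) (hz : 1 - conj w * z ≠ 0) :
    HasDerivAt (fun z => ((z - w) / (1 - conj w * z)) ^ n)
      (n * ((z - w) / (1 - conj w * z)) ^ (n - 1) * ((1 - conj w * w) / (1 - conj w * z) ^ 2)) z := by
  have hnum : HasDerivAt (fun z => z - w) 1 z := (hasDerivAt_id z).sub_const w
  have hden : HasDerivAt (fun z => 1 - conj w * z) (-conj w) z := by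
    simpa using ((hasDerivAt_id z).const_mul (conj w)).const_sub 1
  refine ((hnum.div hden hz).pow n).congr_deriv ?_
  simp only [Pi.div_apply]
  ring

theorem norm_deriv_blaschke_pow (n : ℕ) (hw : ‖w‖ < 1) (hz : ‖z‖ = 1) :
    ‖deriv (fun z => ((z - w) / (1 - conj w * z)) ^ n) z‖
      = n * (1 - ‖w‖ ^ 2) / ‖1 - conj w * z‖ ^ 2 := by
  have hden := one_sub_conj_mul_ne_zero hw hz
  have hww : 1 - conj w * w = ((1 - ‖w‖ ^ 2 : ℝ) : ℂ) := by
    rw [conj_mul']; push_cast; ring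
  have hw2 : 0 ≤ 1 - ‖w‖ ^ 2 := by nlinarith [norm_nonneg w]
  rw [(hasDerivAt_blaschke_pow n hden).deriv, hww, norm_mul, norm_mul, norm_pow, norm_div,
    norm_sub_eq_norm_one_sub_conj_mul hz, div_self (norm_ne_zero_iff.mpr hden), one_pow, mul_one,
    norm_div, norm_pow, norm_natCast, norm_real, Real.norm_of_nonneg hw2, mul_div_assoc]

end UnitCircle

theorem conj_ofReal_mul_exp_mul_exp (s ψ φ : ℝ) :
    conj (s * exp (ψ * I)) * exp (φ * I) = s * exp ((φ - ψ : ℝ) * I) := by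
  rw [map_mul, conj_ofReal, ← exp_conj, map_mul, conj_I, conj_ofReal, mul_assoc, ← exp_add]
  push_cast
  ring_nf

theorem norm_one_sub_ofReal_mul_exp_sq (s θ : ℝ) :
    ‖1 - s * exp (θ * I)‖ ^ 2 = 1 + s ^ 2 - 2 * s * Real.cos θ := by
  rw [Complex.sq_norm, normSq_apply]
  simp only [sub_re, sub_im, mul_re, mul_im, ofReal_re, ofReal_im, one_re, one_im,
    exp_ofReal_mul_I_re, exp_ofReal_mul_I_im]
  linear_combination s ^ 2 * Real.sin_sq_add_cos_sq θ

theorem norm_deriv_blaschke_pow_exp (n : ℕ) {s : ℝ} (hs : 0 ≤ s) (hs1 : s < 1) (ψ φ : ℝ) :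
    ‖deriv (fun z => ((z - s * exp (ψ * I)) / (1 - conj (s * exp (ψ * I)) * z)) ^ n)
        (exp (φ * I))‖ = n * (1 - s ^ 2) / (1 + s ^ 2 - 2 * s * Real.cos (φ - ψ)) := by
  have hw : ‖(s * exp (ψ * I) : ℂ)‖ = s := by
    rw [norm_mul, norm_exp_ofReal_mul_I, norm_real, Real.norm_of_nonneg hs, mul_one]
  rw [norm_deriv_blaschke_pow n (hw.symm ▸ hs1) (norm_exp_ofReal_mul_I φ), hw,
    conj_ofReal_mul_exp_mul_exp, norm_one_sub_ofReal_mul_exp_sq]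

theorem norm_deriv_blaschke_pow_exp_le_one_iff (n : ℕ) {s : ℝ} (hs : 0 ≤ s) (hs1 : s < 1)
    (ψ φ : ℝ) :
    ‖deriv (fun z => ((z - s * exp (ψ * I)) / (1 - conj (s * exp (ψ * I)) * z)) ^ n)
        (exp (φ * I))‖ ≤ 1 ↔ n * (1 - s ^ 2) ≤ 1 + s ^ 2 - 2 * s * Real.cos (φ - ψ) := by
  have hpos : 0 < 1 + s ^ 2 - 2 * s * Real.cos (φ - ψ) := by
    nlinarith [Real.cos_le_one (φ - ψ)]
  rw [norm_deriv_blaschke_pow_exp n hs hs1, div_le_one hpos]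

theorem setOf_norm_deriv_blaschke_pow_le_one (n : ℕ) {s : ℝ} (hs : 0 ≤ s) (hs1 : s < 1) (ψ : ℝ) :
    {z : ℂ | ‖z‖ = 1 ∧
        ‖deriv (fun z => ((z - s * exp (ψ * I)) / (1 - conj (s * exp (ψ * I)) * z)) ^ n) z‖ ≤ 1}
      = {z | ∃ φ : ℝ, z = exp (φ * I) ∧ n * (1 - s ^ 2) ≤ 1 + s ^ 2 - 2 * s * Real.cos (φ - ψ)} := by
  ext z
  constructor
  · rintro ⟨hz, hB⟩
    obtain ⟨φ, rfl⟩ := (norm_eq_one_iff z).mp hz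
    exact ⟨φ, rfl, (norm_deriv_blaschke_pow_exp_le_one_iff n hs hs1 ψ φ).mp hB⟩
  · rintro ⟨φ, rfl, h⟩
    exact ⟨norm_exp_ofReal_mul_I φ, (norm_deriv_blaschke_pow_exp_le_one_iff n hs hs1 ψ φ).mpr h⟩

def circleSublevel (ψ a : ℝ) : Set ℂ := {z | ∃ φ : ℝ, z = exp (φ * I) ∧ Real.cos (φ - ψ) ≤ a}

theorem circleSublevel_neg_one (ψ : ℝ) : circleSublevel ψ (-1) = {exp ((ψ + π) * I)} := by
  ext z
  constructor
  · rintro ⟨φ, rfl, h⟩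
    obtain ⟨k, hk⟩ := Real.cos_eq_neg_one_iff.mp (le_antisymm h (Real.neg_one_le_cos _))
    have hφ : φ = ψ + π + k * (2 * π) := by linarith
    exact exp_eq_exp_iff_exists_int.mpr ⟨k, by rw [hφ]; push_cast; ring⟩
  · rintro rfl
    exact ⟨ψ + π, by push_cast; rfl, by rw [add_sub_cancel_left, Real.cos_pi]⟩

theorem exp_add_pi_mem_circleSublevel (ψ : ℝ) {a : ℝ} (ha : -1 ≤ a) :
    exp ((ψ + π) * I) ∈ circleSublevel ψ a :=
  ⟨ψ + π, by push_cast; rfl, by rwa [add_sub_cancel_left, Real.cos_pi]⟩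

theorem setOf_norm_deriv_blaschke_pow_le_one_eq_circleSublevel (n : ℕ) {s : ℝ} (hs : 0 < s)
    (hs1 : s < 1) (ψ : ℝ) :
    {z : ℂ | ‖z‖ = 1 ∧
        ‖deriv (fun z => ((z - s * exp (ψ * I)) / (1 - conj (s * exp (ψ * I)) * z)) ^ n) z‖ ≤ 1}
      = circleSublevel ψ ((1 - n + (1 + n) * s ^ 2) / (2 * s)) := by
  rw [setOf_norm_deriv_blaschke_pow_le_one n hs.le hs1]
  refine Set.ext fun z => exists_congr fun φ => and_congr_right fun _ => ?_
  rw [le_div_iff₀ (by positivity)]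
  constructor <;> intro h <;> linarith

theorem stmt_6 (n : ℕ) (hn : 2 ≤ n) (s ψ : ℝ) (hs : 0 ≤ s) (hs1 : s < 1)
    (w : ℂ) (hw : w = s * Complex.exp (ψ * I))
    (B : ℂ → ℂ)
    (hB : B = fun z => ((z - w) / (1 - (starRingEnd ℂ) w * z)) ^ n)
    (K : Set ℂ)
    (hK : K = {z : ℂ | ‖z‖ = 1 ∧ ‖deriv B z‖ ≤ 1}) :
    (s < ((n : ℝ) - 1) / ((n : ℝ) + 1) → K = ∅) ∧
      (s = ((n : ℝ) - 1) / ((n : ℝ) + 1) → K = {Complex.exp ((ψ + Real.pi) * I)}) ∧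
      (((n : ℝ) - 1) / ((n : ℝ) + 1) < s →
        K = {z : ℂ | ∃ φ : ℝ, z = Complex.exp (φ * I) ∧
              Real.cos (φ - ψ) ≤ (1 - n + (1 + n) * s ^ 2) / (2 * s)} ∧
          Complex.exp ((ψ + Real.pi) * I) ∈ K) := by
  subst hw hB hK
  have hn1 : (1 : ℝ) < n := by exact_mod_cast hn
  have hs_pos : (n - 1) / (n + 1) ≤ s → 0 < s :=
    (div_pos (by linarith) (by linarith)).trans_le
  refine ⟨fun hlt => ?_, fun heq => ?_, fun hgt => ?_⟩
  · have : s * (n + 1) < n - 1 := (lt_div_iff₀ (by linarith)).mp hlt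
    rw [setOf_norm_deriv_blaschke_pow_le_one n hs hs1, Set.eq_empty_iff_forall_notMem]
    rintro _ ⟨φ, -, h⟩
    nlinarith [Real.neg_one_le_cos (φ - ψ)]
  · rw [setOf_norm_deriv_blaschke_pow_le_one_eq_circleSublevel n (hs_pos heq.ge) hs1,
      ← circleSublevel_neg_one]
    congr 1
    have : (n : ℝ) - 1 ≠ 0 := by linarith
    rw [heq]
    field_simp
    ring
  · have hs0 := hs_pos hgt.le
    rw [setOf_norm_deriv_blaschke_pow_le_one_eq_circleSublevel n hs0 hs1]
    refine ⟨rfl, exp_add_pi_mem_circleSublevel ψ ?_⟩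
    have : n - 1 < s * (n + 1) := (div_lt_iff₀ (by linarith)).mp hgt
    rw [le_div_iff₀ (by positivity)]
    nlinarith
end

section
/- Let n ≥ 2, (n−1)/(n+1) ≤ s < 1, w = se^{iψ}, and A(z) = (z−w)/(1−w̄z). If e^{iφ} satisfies cos(φ−ψ) = t(s) = (1−n+(1+n)s²)/(2s), then the real part of e^{−iψ}A(e^{iφ}) equals u(s) = (1−n−(1+n)s²)/(2ns). -/
/-!
Rotating by `e^{-iψ}` reduces to the real zero `s`, where with `θ = φ - ψ`
`Re ((e^{iθ} - s) / (1 - s e^{iθ})) = ((1 + s²) cos θ - 2s) / (1 - 2s cos θ + s²)`.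
The prescribed value of `cos θ` turns the denominator into `n (1 - s²) > 0`, and the rest is algebra.
-/

open Complex

theorem exp_neg_mul_blaschke_exp_mul (s ψ : ℝ) (ζ : ℂ) :
    exp (-ψ * I) * ((exp (ψ * I) * ζ - s * exp (ψ * I)) /
      (1 - starRingEnd ℂ (s * exp (ψ * I)) * (exp (ψ * I) * ζ))) = (ζ - s) / (1 - s * ζ) := by
  have hinv : exp (-ψ * I) * exp (ψ * I) = 1 := by rw [← exp_add]; simp
  have hconj : starRingEnd ℂ (s * exp (ψ * I)) = s * exp (-ψ * I) := by
    simp [← exp_conj, conj_ofReal]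
  rw [hconj, mul_div_assoc']
  congr 1
  · linear_combination (ζ - s) * hinv
  · linear_combination (-(s : ℂ) * ζ) * hinv

theorem re_blaschke_exp_mul_I (s θ : ℝ) :
    ((exp (θ * I) - s) / (1 - s * exp (θ * I))).re =
      ((1 + s ^ 2) * Real.cos θ - 2 * s) / (1 - 2 * s * Real.cos θ + s ^ 2) := by
  rw [div_re, ← add_div]
  simp only [normSq_apply, sub_re, sub_im, mul_re, mul_im, ofReal_re, ofReal_im, one_re, one_im,
    exp_ofReal_mul_I_re, exp_ofReal_mul_I_im]
  congr 1
  · linear_combination -s * Real.sin_sq_add_cos_sq θ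
  · linear_combination s ^ 2 * Real.sin_sq_add_cos_sq θ

theorem blaschke_re_formula_of_two_mul_cos {n s c : ℝ} (hn : 0 < n) (hs : 0 < s) (hs1 : s < 1)
    (hc : 2 * s * c = 1 - n + (1 + n) * s ^ 2) :
    ((1 + s ^ 2) * c - 2 * s) / (1 - 2 * s * c + s ^ 2) =
      (1 - n - (1 + n) * s ^ 2) / (2 * n * s) := by
  have hden : 1 - 2 * s * c + s ^ 2 = n * (1 - s ^ 2) := by linear_combination -hc
  have hpos : 0 < n * (1 - s ^ 2) := mul_pos hn (by nlinarith)
  rw [hden, div_eq_div_iff hpos.ne' (by positivity)]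
  linear_combination n * (1 + s ^ 2) * hc

theorem stmt_8 (n : ℕ) (hn : 2 ≤ n) (s ψ : ℝ)
    (hs : ((n : ℝ) - 1) / ((n : ℝ) + 1) ≤ s) (hs1 : s < 1)
    (w : ℂ) (hw : w = s * Complex.exp (ψ * I))
    (A : ℂ → ℂ) (hA : A = fun z => (z - w) / (1 - (starRingEnd ℂ) w * z))
    (φ : ℝ) (hφ : Real.cos (φ - ψ) = (1 - n + (1 + n) * s ^ 2) / (2 * s)) :
    (Complex.exp (-ψ * I) * A (Complex.exp (φ * I))).re =
      (1 - n - (1 + n) * s ^ 2) / (2 * n * s) := by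
  have hn2 : (2 : ℝ) ≤ n := by exact_mod_cast hn
  have hs0 : 0 < s := lt_of_lt_of_le (div_pos (by linarith) (by linarith)) hs
  have hrot : exp (φ * I) = exp (ψ * I) * exp ((φ - ψ : ℝ) * I) := by
    rw [← exp_add]; push_cast; ring_nf
  subst hw hA
  rw [hrot, exp_neg_mul_blaschke_exp_mul, re_blaschke_exp_mul_I]
  refine blaschke_re_formula_of_two_mul_cos (by linarith) hs0 hs1 ?_
  rw [hφ]
  field_simp
end

section
/- Let n ≥ 2. Define p(s) = 2π − 2 arccos(t(s)) and q(s) = n(2π − 2 arccos(u(s))) for s ∈ ((n−1)/(n+1), 1), where t(s) = (1−n+(1+n)s²)/(2s) and u(s) = (1−n−(1+n)s²)/(2ns). Then p'(s) > q'(s) for all s in this interval. -/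
/-!
The two `arccos` arguments are tied by the identity `n² (1 - u²) = 1 - t²`
(from `n u - t = -(n + 1) s` and `n u + t = (1 - n) / s`). Hence
`p' = 2 t' / √(1 - t²)` and `q' = 2 n² u' / √(1 - t²)` share a positive denominator, and
`t' - n² u' = ((n + 1)² s² - (n - 1)²) / (2 s²)` is positive exactly when
`s > (n - 1) / (n + 1)`.
-/

open Real Set

lemma HasDerivAt.two_pi_sub_two_arccos {f : ℝ → ℝ} {f' x : ℝ} (hf : HasDerivAt f f' x)
    (h : f x ^ 2 < 1) :
    HasDerivAt (fun y => 2 * π - 2 * arccos (f y)) (2 * f' / √(1 - f x ^ 2)) x := by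
  obtain ⟨hlo, hhi⟩ := abs_lt.mp ((sq_lt_one_iff_abs_lt_one _).mp h)
  refine (((hasDerivAt_arccos hlo.ne' hhi.ne).comp x hf).const_mul 2
    |>.const_sub (2 * π)).congr_deriv ?_
  ring

namespace UnicriticalBlaschke

noncomputable def t (n s : ℝ) : ℝ := (1 - n + (1 + n) * s ^ 2) / (2 * s)

noncomputable def u (n s : ℝ) : ℝ := (1 - n - (1 + n) * s ^ 2) / (2 * n * s)

variable {n s : ℝ}

lemma hasDerivAt_t (hs : s ≠ 0) :
    HasDerivAt (t n) (((n - 1) / s ^ 2 + (n + 1)) / 2) s := by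
  have hnum := ((hasDerivAt_pow 2 s).const_mul (1 + n)).const_add (1 - n)
  refine (hnum.div ((hasDerivAt_id' s).const_mul 2) (by simpa using hs)).congr_deriv ?_
  field_simp
  ring

lemma hasDerivAt_u (hn : n ≠ 0) (hs : s ≠ 0) :
    HasDerivAt (u n) (((n - 1) / s ^ 2 - (n + 1)) / (2 * n)) s := by
  have hnum := ((hasDerivAt_pow 2 s).const_mul (1 + n)).const_sub (1 - n)
  refine (hnum.div ((hasDerivAt_id' s).const_mul (2 * n)) (by simp [hn, hs])).congr_deriv ?_
  field_simp
  ring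

lemma one_sub_u_sq (hn : n ≠ 0) (hs : s ≠ 0) : 1 - u n s ^ 2 = (1 - t n s ^ 2) / n ^ 2 := by
  unfold t u
  field_simp
  ring

lemma t_sq_lt_one (hn : 1 ≤ n) (hlow : n - 1 < s * (n + 1)) (hs : s < 1) : t n s ^ 2 < 1 := by
  have hs0 : 0 < s := by nlinarith
  rw [t, sq_lt_one_iff_abs_lt_one, abs_lt, lt_div_iff₀ (by positivity),
    div_lt_iff₀ (by positivity)]
  constructor
  · nlinarith [mul_pos (by linarith : 0 < s + 1) (by linarith : 0 < s * (n + 1) - (n - 1))]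
  · nlinarith [mul_pos (by linarith : 0 < 1 - s) (by nlinarith : 0 < s * (n + 1) + (n - 1))]

lemma u_sq_lt_one (hn : 1 ≤ n) (hlow : n - 1 < s * (n + 1)) (hs : s < 1) : u n s ^ 2 < 1 := by
  have hs0 : s ≠ 0 := by rintro rfl; linarith
  have hu := one_sub_u_sq (by positivity : n ≠ 0) hs0
  have : 0 < (1 - t n s ^ 2) / n ^ 2 :=
    div_pos (by linarith [t_sq_lt_one hn hlow hs]) (by positivity)
  linarith

lemma sq_mul_deriv_u_lt_deriv_t (hn : 1 ≤ n) (hlow : n - 1 < s * (n + 1)) :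
    n ^ 2 * (((n - 1) / s ^ 2 - (n + 1)) / (2 * n)) < ((n - 1) / s ^ 2 + (n + 1)) / 2 := by
  have hs0 : 0 < s := by nlinarith
  have hdiff : ((n - 1) / s ^ 2 + (n + 1)) / 2 - n ^ 2 * (((n - 1) / s ^ 2 - (n + 1)) / (2 * n))
      = ((s * (n + 1)) ^ 2 - (n - 1) ^ 2) / (2 * s ^ 2) := by
    field_simp
    ring
  have : 0 < ((s * (n + 1)) ^ 2 - (n - 1) ^ 2) / (2 * s ^ 2) :=
    div_pos (by nlinarith) (by positivity)
  linarith

end UnicriticalBlaschke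

open UnicriticalBlaschke in
theorem stmt_11 (n : ℕ) (hn : 2 ≤ n)
    (t u p q : ℝ → ℝ)
    (ht : t = fun s : ℝ => (1 - (n : ℝ) + (1 + (n : ℝ)) * s ^ 2) / (2 * s))
    (hu : u = fun s : ℝ => (1 - (n : ℝ) - (1 + (n : ℝ)) * s ^ 2) / (2 * (n : ℝ) * s))
    (hp : p = fun s : ℝ => 2 * Real.pi - 2 * Real.arccos (t s))
    (hq : q = fun s : ℝ => (n : ℝ) * (2 * Real.pi - 2 * Real.arccos (u s))) :
    ∀ s ∈ Set.Ioo (((n : ℝ) - 1) / ((n : ℝ) + 1)) 1, deriv q s < deriv p s := by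
  subst ht hu hp hq
  rintro s ⟨hs_low, hs_one⟩
  have hn1 : (1 : ℝ) ≤ n := by exact_mod_cast one_le_two.trans hn
  have hlow : (n : ℝ) - 1 < s * (n + 1) := (div_lt_iff₀ (by positivity)).mp hs_low
  have hs0 : s ≠ 0 := by rintro rfl; linarith
  change deriv (fun s => n * (2 * π - 2 * arccos (u n s))) s
    < deriv (fun s => 2 * π - 2 * arccos (t n s)) s
  rw [((hasDerivAt_u (by positivity) hs0).two_pi_sub_two_arccos
      (u_sq_lt_one hn1 hlow hs_one)).const_mul (n : ℝ) |>.deriv,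
    ((hasDerivAt_t hs0).two_pi_sub_two_arccos (t_sq_lt_one hn1 hlow hs_one)).deriv,
    one_sub_u_sq (by positivity) hs0, sqrt_div' _ (sq_nonneg _), sqrt_sq (by positivity),
    mul_div_assoc', div_div_eq_mul_div]
  refine div_lt_div_of_pos_right ?_ (sqrt_pos.mpr (by linarith [t_sq_lt_one hn1 hlow hs_one]))
  linarith [sq_mul_deriv_u_lt_deriv_t hn1 hlow]
end
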